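/- For each fixed r ∈ [0,1], the function t ↦ s_{r,t}(L,o) is piecewise linear on [0,1]; similarly, for each fixed t ∈ [0,1], the function r ↦ s_{r,t}(L,o) is piecewise linear on [0,1]. -/
import Mathlib


/-- The filtered Sarkar–Seed–Szabó chain complex of (a diagram of) an oriented annular
link, presented abstractly: an `𝔽₂`-chain complex with a finite distinguished basis of
generators carrying the homological grading `grh`, the quantum grading `grq` and the
annular grading `grk` (number of nontrivial circles labeled `+` minus those labeled `−`),
together with the canonical generator `g = g(o)` determined by the orientation,
a cycle whose homology class is nonzero. -/
structure SSSComplex where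
  /-- the distinguished generators (labelings of complete resolutions) -/
  gen : Type
  [finGen : Fintype gen]
  /-- the homological grading -/
  grh : gen → ℤ
  /-- the quantum grading -/
  grq : gen → ℤ
  /-- the annular grading -/
  grk : gen → ℤ
  /-- the filtered total differential `δ_ftot` -/
  δ : (gen →₀ ZMod 2) →ₗ[ZMod 2] (gen →₀ ZMod 2)
  δ_sq : δ.comp δ = 0
  /-- the canonical generator `g(o)` of the orientation -/
  g : gen →₀ ZMod 2
  g_cycle : δ g = 0
  g_nonzero : ∀ x, g ≠ δ x

attribute [instance] SSSComplex.finGen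

namespace SSSComplex

/-- The grading `gr_{r,t} = r·gr_h + (1−r)(gr_q − t·gr_k)` of a distinguished generator. -/
noncomputable def grrt (K : SSSComplex) (r t : ℝ) (a : K.gen) : ℝ :=
  r * K.grh a + (1 - r) * (K.grq a - t * K.grk a)

/-- The `gr_{r,t}`-filtration level of a chain: the minimum of `gr_{r,t}` over its support. -/
noncomputable def chainGr (K : SSSComplex) (r t : ℝ) (x : K.gen →₀ ZMod 2) : ℝ :=
  sInf (K.grrt r t '' (x.support : Set K.gen))

/-- `s_{r,t}`: the maximal `gr_{r,t}`-filtration level of a cycle representing the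
homology class of the canonical generator `g(o)`. -/
noncomputable def sVal (K : SSSComplex) (r t : ℝ) : ℝ :=
  sSup {v : ℝ | ∃ y z : K.gen →₀ ZMod 2,
    K.δ y = 0 ∧ y = K.g + K.δ z ∧ v = K.chainGr r t y}

end SSSComplex

/-- The assignment, to every oriented annular link `(L,o)` in the thickened annulus
`A × I`, of the filtered Sarkar–Seed–Szabó complex of (a diagram of) the link. -/
structure AnnularSSS where
  /-- oriented annular links `(L, o)` in the thickened annulus `A × I` -/
  Link : Type
  /-- the filtered Sarkar–Seed–Szabó complex of (a diagram of) the oriented link -/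
  complex : Link → SSSComplex

/-- The annular invariant `s_{r,t}(L,o)`. -/
noncomputable def AnnularSSS.s (T : AnnularSSS) (r t : ℝ) (L : T.Link) : ℝ :=
  (T.complex L).sVal r t

/-- A function `f` is piecewise linear on the interval `[a,b]`: there is a finite
partition `a = p 0 < p 1 < ⋯ < p m = b` such that `f` is affine on each subinterval. -/
def PiecewiseLinearOn (f : ℝ → ℝ) (a b : ℝ) : Prop :=
  ∃ (m : ℕ) (p : ℕ → ℝ), p 0 = a ∧ p m = b ∧ (∀ i < m, p i < p (i + 1)) ∧
    ∀ i < m, ∃ c d : ℝ, ∀ x ∈ Set.Icc (p i) (p (i + 1)), f x = c * x + d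

open Set

lemma affine_core {ι κ : Type} [Fintype ι] (c d : ι → ℝ)
    (S : κ → Finset ι) (Y : Finset κ) (hY : Y.Nonempty) :
    ∃ (m : ℕ) (p : ℕ → ℝ), p 0 = 0 ∧ p m = 1 ∧ (∀ i < m, p i < p (i + 1)) ∧
      ∀ i < m, ∃ c₀ d₀ : ℝ, ∀ x ∈ Set.Icc (p i) (p (i + 1)),
        sSup ((fun y => sInf ((fun a => c a * x + d a) '' (S y : Set ι))) '' (Y : Set κ))
          = c₀ * x + d₀ := by
  classical
  set C : Finset (ℝ × ℝ) := insert (0,0) (Finset.univ.image fun a => (c a, d a)) with hC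
  set s : Finset ℝ := insert 0 (insert 1
      (((C ×ˢ C).image fun p => (p.2.2 - p.1.2) / (p.1.1 - p.2.1)).filter
        fun x => 0 ≤ x ∧ x ≤ 1)) with hs
  have h0 : (0:ℝ) ∈ s := by simp [hs]
  have h1 : (1:ℝ) ∈ s := by simp [hs]
  have hrange : ∀ w ∈ s, 0 ≤ w ∧ w ≤ 1 := by
    intro w hw
    simp only [hs, Finset.mem_insert, Finset.mem_filter] at hw
    rcases hw with rfl | rfl | ⟨-, h⟩
    · norm_num
    · norm_num
    · exact h
  set n := s.card with hn
  have hn2 : 2 ≤ n := by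
    have : ({0, 1} : Finset ℝ) ⊆ s := by
      intro w hw; simp at hw; rcases hw with rfl | rfl <;> assumption
    calc 2 = ({0,1} : Finset ℝ).card := by norm_num
    _ ≤ n := Finset.card_le_card this
  set e := s.orderIsoOfFin hn.symm with he
  set p : ℕ → ℝ := fun i => if h : i < n then (e ⟨i, h⟩ : ℝ) else 1 with hp
  have hmem : ∀ i (h : i < n), (e ⟨i, h⟩ : ℝ) ∈ s := fun i h => (e ⟨i, h⟩).2
  have hp0 : p 0 = 0 := by
    have h0n : 0 < n := by omega
    have hle : (e ⟨0, h0n⟩ : ℝ) ≤ 0 := by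
      have h := e.le_iff_le.mpr
        (show (⟨0, h0n⟩ : Fin n) ≤ e.symm ⟨0, h0⟩ from Fin.le_def.mpr (Nat.zero_le _))
      rw [e.apply_symm_apply] at h
      exact Subtype.coe_le_coe.mpr h
    have hge : (0:ℝ) ≤ (e ⟨0, h0n⟩ : ℝ) := (hrange _ (hmem 0 h0n)).1
    simp only [hp, dif_pos h0n]
    linarith
  have hplast : p (n - 1) = 1 := by
    have hln : n - 1 < n := by omega
    have hge : (1:ℝ) ≤ (e ⟨n - 1, hln⟩ : ℝ) := by
      have hj : (e.symm ⟨1, h1⟩ : Fin n) ≤ ⟨n - 1, hln⟩ := by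
        have hlt := (e.symm ⟨1, h1⟩).isLt
        rw [Fin.le_def]
        show _ ≤ n - 1
        omega
      have h := e.le_iff_le.mpr hj
      rw [e.apply_symm_apply] at h
      exact Subtype.coe_le_coe.mpr h
    have hle : (e ⟨n - 1, hln⟩ : ℝ) ≤ 1 := (hrange _ (hmem _ hln)).2
    simp only [hp, dif_pos hln]
    linarith
  refine ⟨n - 1, p, hp0, hplast, ?_, ?_⟩
  · intro i hi
    have h1n : i < n := by omega
    have h2n : i + 1 < n := by omega
    simp only [hp, dif_pos h1n, dif_pos h2n]
    exact_mod_cast e.lt_iff_lt.mpr (Fin.mk_lt_mk.mpr (by omega))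
  · intro i hi
    have h1n : i < n := by omega
    have h2n : i + 1 < n := by omega
    set u := p i with hu
    set v := p (i + 1) with hv
    have hus : u ∈ s := by simp only [hu, hp, dif_pos h1n]; exact hmem _ _
    have hvs : v ∈ s := by simp only [hv, hp, dif_pos h2n]; exact hmem _ _
    have huv : u < v := by
      simp only [hu, hv, hp, dif_pos h1n, dif_pos h2n]
      exact_mod_cast e.lt_iff_lt.mpr (Fin.mk_lt_mk.mpr (by omega))
    have hconsec : ∀ w ∈ s, ¬ (u < w ∧ w < v) := by
      intro w hw ⟨hw1, hw2⟩
      set k := e.symm ⟨w, hw⟩ with hk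
      have hwk : (e k : ℝ) = w := by simp [hk]
      have l1 : (⟨i, h1n⟩ : Fin n) < k := by
        apply e.lt_iff_lt.mp
        rw [← Subtype.coe_lt_coe, hwk]
        simpa only [hu, hp, dif_pos h1n] using hw1
      have l2 : k < (⟨i + 1, h2n⟩ : Fin n) := by
        apply e.lt_iff_lt.mp
        rw [← Subtype.coe_lt_coe, hwk]
        simpa only [hv, hp, dif_pos h2n] using hw2
      rw [Fin.lt_def] at l1 l2
      simp at l1 l2
      omega
    set mid := (u + v) / 2 with hmid
    have hmid1 : u < mid := by rw [hmid]; linarith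
    have hmid2 : mid < v := by rw [hmid]; linarith
    -- key order-extension lemma
    have key : ∀ q ∈ C, ∀ q' ∈ C, q.1 * mid + q.2 ≤ q'.1 * mid + q'.2 →
        ∀ x ∈ Icc u v, q.1 * x + q.2 ≤ q'.1 * x + q'.2 := by
      intro q hq q' hq' hle x hx
      by_cases he0 : q.1 - q'.1 = 0
      · have : q.1 = q'.1 := by linarith
        rw [this] at hle ⊢
        linarith
      · set x0 := (q'.2 - q.2) / (q.1 - q'.1) with hx0def
        have hx0e : (q.1 - q'.1) * x0 = q'.2 - q.2 := by
          rw [hx0def]; field_simp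
        have hx0 : x0 ≤ u ∨ v ≤ x0 := by
          by_contra hcon
          push_neg at hcon
          obtain ⟨hc1, hc2⟩ := hcon
          have h0u : 0 ≤ u := (hrange u hus).1
          have hv1 : v ≤ 1 := (hrange v hvs).2
          have hx0s : x0 ∈ s := by
            simp only [hs, Finset.mem_insert, Finset.mem_filter, Finset.mem_image,
              Finset.mem_product]
            right; right
            exact ⟨⟨(q, q'), ⟨hq, hq'⟩, rfl⟩, by linarith, by linarith⟩
          exact hconsec x0 hx0s ⟨hc1, hc2⟩
        have hmid0 : (q.1 - q'.1) * (mid - x0) ≤ 0 := by nlinarith [hle, hx0e]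
        rcases hx0 with h | h
        · have he0n : q.1 - q'.1 ≤ 0 := by nlinarith [hmid0]
          have : (q.1 - q'.1) * (x - x0) ≤ 0 :=
            mul_nonpos_of_nonpos_of_nonneg he0n (by linarith [hx.1])
          nlinarith [hx0e, this]
        · have he0n : 0 ≤ q.1 - q'.1 := by nlinarith [hmid0]
          have : (q.1 - q'.1) * (x - x0) ≤ 0 :=
            mul_nonpos_of_nonneg_of_nonpos he0n (by linarith [hx.2])
          nlinarith [hx0e, this]
    -- each inner inf is affine on [u,v] with coefficients in C
    have hyaff : ∀ y : κ, ∃ q ∈ C, ∀ x ∈ Icc u v,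
        sInf ((fun a => c a * x + d a) '' (S y : Set ι)) = q.1 * x + q.2 := by
      intro y
      rcases (S y).eq_empty_or_nonempty with hemp | hne
      · exact ⟨(0,0), Finset.mem_insert_self _ _,
          fun x hx => by simp [hemp, Real.sInf_empty]⟩
      · obtain ⟨a, ha, hamin⟩ := (S y).exists_min_image (fun a => c a * mid + d a) hne
        refine ⟨(c a, d a),
          Finset.mem_insert_of_mem (Finset.mem_image_of_mem _ (Finset.mem_univ a)),
          fun x hx => ?_⟩
        apply le_antisymm
        · exact csInf_le (((S y).finite_toSet.image _).bddBelow) ⟨a, ha, rfl⟩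
        · apply le_csInf (((Finset.coe_nonempty.mpr hne)).image _)
          rintro b ⟨a', ha', rfl⟩
          exact key (c a, d a)
            (Finset.mem_insert_of_mem (Finset.mem_image_of_mem _ (Finset.mem_univ a)))
            (c a', d a')
            (Finset.mem_insert_of_mem (Finset.mem_image_of_mem _ (Finset.mem_univ a')))
            (hamin a' (by exact_mod_cast ha')) x hx
    choose q hqC hq using hyaff
    obtain ⟨y0, hy0Y, hmax⟩ := Y.exists_max_image (fun y => (q y).1 * mid + (q y).2) hY
    refine ⟨(q y0).1, (q y0).2, fun x hx => ?_⟩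
    apply le_antisymm
    · apply csSup_le ((Finset.coe_nonempty.mpr hY).image _)
      rintro b ⟨y, hy, rfl⟩
      show sInf ((fun a => c a * x + d a) '' ↑(S y)) ≤ _
      rw [hq y x hx]
      exact key (q y) (hqC y) (q y0) (hqC y0) (hmax y (by exact_mod_cast hy)) x hx
    · exact le_csSup ((Y.finite_toSet.image _).bddAbove) ⟨y0, hy0Y, hq y0 x hx⟩


lemma sVal_aux (K : SSSComplex) (c d : K.gen → ℝ) (gr : ℝ → K.gen → ℝ)
    (hgr : ∀ x a, gr x a = c a * x + d a) :
    PiecewiseLinearOn (fun x => sSup {v : ℝ | ∃ y z : K.gen →₀ ZMod 2,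
      K.δ y = 0 ∧ y = K.g + K.δ z ∧ v = sInf (gr x '' (y.support : Set K.gen))}) 0 1 := by
  classical
  haveI : Fintype (K.gen →₀ ZMod 2) := Finsupp.fintype
  set Y : Finset (K.gen →₀ ZMod 2) :=
    Finset.univ.filter (fun y => K.δ y = 0 ∧ ∃ z, y = K.g + K.δ z) with hYdef
  have hY : Y.Nonempty := by
    refine ⟨K.g, ?_⟩
    simp only [hYdef, Finset.mem_filter, Finset.mem_univ, true_and]
    exact ⟨K.g_cycle, 0, by simp⟩
  have hgrx : ∀ x : ℝ, gr x = fun a => c a * x + d a := fun x => funext (hgr x)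
  obtain ⟨m, p, h0, h1, hmono, haff⟩ := affine_core c d
    (fun y : K.gen →₀ ZMod 2 => y.support) Y hY
  refine ⟨m, p, h0, h1, hmono, fun i hi => ?_⟩
  obtain ⟨c₀, d₀, hcd⟩ := haff i hi
  refine ⟨c₀, d₀, fun x hx => ?_⟩
  rw [← hcd x hx]
  apply congrArg sSup
  ext w
  constructor
  · rintro ⟨y, z, hy1, hy2, rfl⟩
    refine ⟨y, ?_, by rw [hgrx x]⟩
    simp only [hYdef, Finset.mem_coe, Finset.mem_filter, Finset.mem_univ, true_and]
    exact ⟨hy1, z, hy2⟩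
  · rintro ⟨y, hyY, rfl⟩
    simp only [hYdef, Finset.mem_coe, Finset.mem_filter, Finset.mem_univ, true_and] at hyY
    obtain ⟨hy1, z, hy2⟩ := hyY
    exact ⟨y, z, hy1, hy2, by rw [hgrx x]⟩

/-- For each fixed `r ∈ [0,1]`, the function `t ↦ s_{r,t}(L,o)` is
piecewise linear on `[0,1]`; similarly, for each fixed `t ∈ [0,1]`, the function
`r ↦ s_{r,t}(L,o)` is piecewise linear on `[0,1]`. -/
theorem s_rt_piecewise_linear
    (T : AnnularSSS) (L : T.Link) :
    (∀ r ∈ Set.Icc (0 : ℝ) 1, PiecewiseLinearOn (fun t => T.s r t L) 0 1) ∧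
    (∀ t ∈ Set.Icc (0 : ℝ) 1, PiecewiseLinearOn (fun r => T.s r t L) 0 1) := by
  constructor
  · intro r _
    exact sVal_aux (T.complex L)
      (fun a => -((1 - r) * ((T.complex L).grk a : ℝ)))
      (fun a => r * ((T.complex L).grh a : ℝ) + (1 - r) * ((T.complex L).grq a : ℝ))
      (fun t => (T.complex L).grrt r t)
      (fun t a => by unfold SSSComplex.grrt; ring)
  · intro t _
    exact sVal_aux (T.complex L)
      (fun a => ((T.complex L).grh a : ℝ) -
        (((T.complex L).grq a : ℝ) - t * ((T.complex L).grk a : ℝ)))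
      (fun a => ((T.complex L).grq a : ℝ) - t * ((T.complex L).grk a : ℝ))
      (fun r a => (T.complex L).grrt r t a)
      (fun r a => by unfold SSSComplex.grrt; ring)
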